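/- Let r ≥ 1 and let P : ℤ^r → ℂ be the symbol of a Fourier multiplier on the torus 𝕋^r. Then the following are equivalent: (i) for every u : ℤ^r → ℂ of polynomial growth such that ξ ↦ P(ξ)u(ξ) is rapidly decreasing, u is itself rapidly decreasing; (ii) there exist C > 0, k ∈ ℝ and a finite set F ⊆ ℤ^r such that |P(ξ)| ≥ C(1+‖ξ‖²)^{k/2} for all ξ ∈ ℤ^r \ F. -/

import Mathlib

/-!
If `‖P ξ‖ ≥ C (1 + ‖ξ‖²)^{k/2}` off a finite set, then off that set
`‖u ξ‖ ≤ ‖P ξ u ξ‖ / (C (1 + ‖ξ‖²)^{k/2})`, so rapid decay of `P u` passes to `u` at the cost of `|k|` in the decay exponent; on the finite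
set any bound holds after enlarging the constant.

Conversely, if no such lower bound exists, there are frequencies `ξₙ` with `1 + ‖ξₙ‖² > n` and
`‖P ξₙ‖ < (1 + ‖ξₙ‖²)^{-n/2}`. The indicator `u` of `{ξₙ}` is bounded and `P u` is rapidly
decreasing, yet `u` equals `1` at infinitely many frequencies, so it does not decay.
-/

noncomputable section

open scoped BigOperators

/-- The weight `1 + ‖ξ‖²` for a frequency `ξ ∈ ℤ^r`. -/
def wt {r : ℕ} (ξ : Fin r → ℤ) : ℝ :=
  1 + ∑ i, ((ξ i : ℝ)) ^ 2

/-- A scalar sequence indexed by `ℤ^r` is rapidly decreasing. -/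
def RapidDecayC {r : ℕ} (u : (Fin r → ℤ) → ℂ) : Prop :=
  ∀ M : ℝ, 0 < M → ∃ C : ℝ, 0 < C ∧ ∀ ξ, ‖u ξ‖ ≤ C * wt ξ ^ (-(M / 2))

/-- A scalar sequence indexed by `ℤ^r` has polynomial growth. -/
def PolyGrowthC {r : ℕ} (u : (Fin r → ℤ) → ℂ) : Prop :=
  ∃ C N : ℝ, 0 < C ∧ 0 < N ∧ ∀ ξ, ‖u ξ‖ ≤ C * wt ξ ^ (N / 2)

open Filter Topology Asymptotics

theorem finite_of_tendsto_indicator_const {α M : Type*} [Zero M] [TopologicalSpace M]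
    [T1Space M] {S : Set α} {c : M} (hc : c ≠ 0)
    (h : Tendsto (S.indicator fun _ => c) cofinite (𝓝 0)) : S.Finite := by
  have hne : ∀ᶠ a in cofinite, S.indicator (fun _ => c) a ≠ c :=
    h.eventually (isOpen_ne.mem_nhds hc.symm)
  exact (eventually_cofinite.1 hne).subset fun a ha => by simp [ha]

section

variable {r : ℕ}

theorem one_le_wt (ξ : Fin r → ℤ) : 1 ≤ wt ξ :=
  le_add_of_nonneg_right (Finset.sum_nonneg fun _ _ => sq_nonneg _)

theorem wt_pos (ξ : Fin r → ℤ) : 0 < wt ξ :=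
  zero_lt_one.trans_le (one_le_wt ξ)

-- `‖ξ‖` is the sup norm of `Fin r → ℤ`; each coordinate satisfies `|x| ≤ 1 + x²`.
theorem norm_le_wt (ξ : Fin r → ℤ) : ‖ξ‖ ≤ wt ξ := by
  refine (pi_norm_le_iff_of_nonneg (wt_pos ξ).le).2 fun i => ?_
  have hsq : ((ξ i : ℝ)) ^ 2 ≤ ∑ j, ((ξ j : ℝ)) ^ 2 :=
    Finset.single_le_sum (f := fun j => ((ξ j : ℝ)) ^ 2) (fun j _ => sq_nonneg _)
      (Finset.mem_univ i)
  rw [Int.norm_eq_abs, wt]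
  nlinarith [sq_abs (ξ i : ℝ), sq_nonneg (|(ξ i : ℝ)| - 1)]

theorem tendsto_wt_cofinite_atTop : Tendsto (wt (r := r)) cofinite atTop := by
  rw [← cocompact_eq_cofinite]
  exact tendsto_atTop_mono norm_le_wt tendsto_norm_cocompact_atTop

theorem rapidDecayC_iff_eventually {u : (Fin r → ℤ) → ℂ} :
    RapidDecayC u ↔
      ∀ M : ℝ, 0 < M → ∃ C : ℝ, ∀ᶠ ξ in cofinite, ‖u ξ‖ ≤ C * wt ξ ^ (-(M / 2)) := by
  have hnorm (M : ℝ) (ξ : Fin r → ℤ) : ‖wt ξ ^ (-(M / 2))‖ = wt ξ ^ (-(M / 2)) :=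
    Real.norm_of_nonneg (Real.rpow_nonneg (wt_pos ξ).le _)
  refine ⟨fun h M hM => ?_, fun h M hM => ?_⟩
  · obtain ⟨C, -, hC⟩ := h M hM
    exact ⟨C, .of_forall hC⟩
  · obtain ⟨C, hC⟩ := h M hM
    have hO : u =O[cofinite] fun ξ => wt ξ ^ (-(M / 2)) :=
      .of_bound C (hC.mono fun ξ hξ => by rwa [hnorm])
    obtain ⟨C', hC'pos, hC'⟩ := bound_of_isBigO_cofinite hO
    exact ⟨C', hC'pos, fun ξ => by
      simpa only [hnorm] using hC' (Real.rpow_pos_of_pos (wt_pos ξ) _).ne'⟩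

theorem RapidDecayC.tendsto_cofinite_zero {u : (Fin r → ℤ) → ℂ} (hu : RapidDecayC u) :
    Tendsto u cofinite (𝓝 0) := by
  obtain ⟨C, -, hC⟩ := hu 2 two_pos
  refine squeeze_zero_norm (fun ξ => ?_)
    (by simpa using (tendsto_inv_atTop_zero.comp tendsto_wt_cofinite_atTop).const_mul C)
  simpa [Real.rpow_neg_one] using hC ξ

theorem polyGrowthC_of_norm_le {u : (Fin r → ℤ) → ℂ} {C : ℝ} (hC : 0 < C)
    (hu : ∀ ξ, ‖u ξ‖ ≤ C) : PolyGrowthC u :=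
  ⟨C, 2, hC, two_pos, fun ξ => (hu ξ).trans <|
    le_mul_of_one_le_right hC.le (by simpa using one_le_wt ξ)⟩

theorem RapidDecayC.of_mul_left {P u : (Fin r → ℤ) → ℂ} {C k : ℝ} (hC : 0 < C)
    (hP : ∀ᶠ ξ in cofinite, C * wt ξ ^ (k / 2) ≤ ‖P ξ‖)
    (hPu : RapidDecayC fun ξ => P ξ * u ξ) : RapidDecayC u := by
  refine rapidDecayC_iff_eventually.2 fun M hM => ?_
  obtain ⟨C', hC'pos, hC'⟩ := hPu (M + |k|) (by positivity)
  refine ⟨C' / C, hP.mono fun ξ hξ => ?_⟩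
  have hw := wt_pos ξ
  have hwk := Real.rpow_pos_of_pos hw (k / 2)
  calc ‖u ξ‖ ≤ ‖P ξ * u ξ‖ / (C * wt ξ ^ (k / 2)) := by
        rw [le_div_iff₀ (by positivity), norm_mul, mul_comm ‖P ξ‖]
        exact mul_le_mul_of_nonneg_left hξ (norm_nonneg _)
    _ ≤ C' * wt ξ ^ (-((M + |k|) / 2)) / (C * wt ξ ^ (k / 2)) := by
        gcongr
        exact hC' ξ
    _ = C' / C * wt ξ ^ (-((M + |k| + k) / 2)) := by
        rw [show -((M + |k| + k) / 2) = -((M + |k|) / 2) - k / 2 by ring, Real.rpow_sub hw]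
        ring
    _ ≤ C' / C * wt ξ ^ (-(M / 2)) := by
        gcongr
        · exact one_le_wt ξ
        · linarith [neg_abs_le k]

theorem exists_infinite_rapidDecayC_mul_indicator {P : (Fin r → ℤ) → ℂ}
    (hP : ∀ k : ℝ, ∃ᶠ ξ in cofinite, ‖P ξ‖ < wt ξ ^ (k / 2)) :
    ∃ S : Set (Fin r → ℤ), S.Infinite ∧
      RapidDecayC fun ξ => P ξ * S.indicator (fun _ => 1) ξ := by
  have hg (n : ℕ) : ∃ ξ, (n : ℝ) < wt ξ ∧ ‖P ξ‖ < wt ξ ^ (-(n : ℝ) / 2) :=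
    ((tendsto_wt_cofinite_atTop.eventually_gt_atTop (n : ℝ)).and_frequently (hP (-n))).exists
  choose g hg_wt hg_P using hg
  refine ⟨Set.range g, ?_, rapidDecayC_iff_eventually.2 fun M _ => ⟨1, ?_⟩⟩
  · refine Set.Infinite.of_image wt ?_
    rw [← Set.range_comp]
    refine Set.infinite_of_not_bddAbove (not_bddAbove_iff.2 fun x => ?_)
    obtain ⟨n, hn⟩ := exists_nat_gt x
    exact ⟨_, ⟨n, rfl⟩, hn.trans (hg_wt n)⟩
  · filter_upwards [((Set.finite_Iio ⌈M⌉₊).image g).eventually_cofinite_notMem] with ξ hξ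
    by_cases hS : ξ ∈ Set.range g
    · obtain ⟨n, rfl⟩ := hS
      have hMn : M ≤ n := Nat.ceil_le.1 (not_lt.1 fun hn => hξ ⟨n, hn, rfl⟩)
      rw [Set.indicator_of_mem (Set.mem_range_self n), mul_one, one_mul]
      exact (hg_P n).le.trans
        (Real.rpow_le_rpow_of_exponent_le (one_le_wt _) (by linarith))
    · rw [Set.indicator_of_notMem hS, mul_zero, norm_zero, one_mul]
      exact (Real.rpow_pos_of_pos (wt_pos ξ) _).le

end

theorem scalar_multiplier_GH_iff_general (r : ℕ)
    (P : (Fin r → ℤ) → ℂ) :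
    (∀ u : (Fin r → ℤ) → ℂ, PolyGrowthC u →
        RapidDecayC (fun ξ => P ξ * u ξ) → RapidDecayC u) ↔
      (∃ (C : ℝ) (k : ℝ) (F : Set (Fin r → ℤ)), 0 < C ∧ F.Finite ∧
        ∀ ξ, ξ ∉ F → ‖P ξ‖ ≥ C * wt ξ ^ (k / 2)) := by
  constructor
  · intro hGH
    by_contra! hne
    have hP (k : ℝ) : ∃ᶠ ξ in cofinite, ‖P ξ‖ < wt ξ ^ (k / 2) :=
      frequently_cofinite_iff_infinite.2 fun hfin => by
        obtain ⟨ξ, hξF, hξ⟩ := hne 1 k _ one_pos hfin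
        exact hξF (by simpa using hξ)
    obtain ⟨S, hS, hPS⟩ := exists_infinite_rapidDecayC_mul_indicator hP
    have hu : PolyGrowthC (S.indicator fun _ => 1) :=
      polyGrowthC_of_norm_le one_pos fun ξ =>
        (norm_indicator_le_norm_self _ ξ).trans norm_one.le
    exact hS (finite_of_tendsto_indicator_const one_ne_zero
      (hGH _ hu hPS).tendsto_cofinite_zero)
  · rintro ⟨C, k, F, hC, hF, hP⟩ u - hPu
    exact hPu.of_mul_left hC (hF.eventually_cofinite_notMem.mono hP)

theorem scalar_multiplier_GH_iff (r : ℕ) (hr : 1 ≤ r)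
    (P : (Fin r → ℤ) → ℂ) :
    (∀ u : (Fin r → ℤ) → ℂ, PolyGrowthC u →
        RapidDecayC (fun ξ => P ξ * u ξ) → RapidDecayC u) ↔
      (∃ (C : ℝ) (k : ℝ) (F : Set (Fin r → ℤ)), 0 < C ∧ F.Finite ∧
        ∀ ξ, ξ ∉ F → ‖P ξ‖ ≥ C * wt ξ ^ (k / 2)) :=
  scalar_multiplier_GH_iff_general r P
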